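/- arXiv:1103.4700 — 2 statements merged into one kernel-verified Lean document; each statement's English description precedes it below -/
import Mathlib

section
/- Let m, n be positive integers with m < n. Then the limit as ε → 0 of the contour integral (1/(2πi)) ∮_{|z|=ε} (m z^{m-1})/(z^m - z̄^n) dz equals m, and the limit of (1/(2πi)) ∮_{|z|=ε} (-n z̄^{n-1})/(z^m - z̄^n) dz̄ equals 0. -/
open Complex Filter ComplexConjugate

/-! On `|z| = ε` put `q = z̄ⁿ / (zᵐ - z̄ⁿ)`. Since `|z̄ⁿ| = εⁿ ≤ ε·εᵐ`, we get `|q| ≤ 2ε` once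
`ε ≤ 1/2`. With `dz = iz dθ` and `dz̄ = -i z̄ dθ` the two integrands become `i m (1 + q)` and
`i n q`, so the first normalized integral is within `2mε` of `m` and the second has norm
at most `2nε`. -/

/-- The contour integral `∮_{|z-c|=R} f(z) dz̄`, defined analogously to `circleIntegral`
but against the conjugate differential `dz̄`. -/
noncomputable def circleIntegralConj (f : ℂ → ℂ) (c : ℂ) (R : ℝ) : ℂ :=
  ∫ θ in (0:ℝ)..(2 * Real.pi),
    (starRingEnd ℂ) (deriv (circleMap c R) θ) * f (circleMap c R θ)

lemma norm_one_div_two_pi_I_mul_integral_le {f : ℝ → ℂ} {C : ℝ} (hf : ∀ θ, ‖f θ‖ ≤ C) :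
    ‖1 / (2 * Real.pi * I) * ∫ θ in (0:ℝ)..(2 * Real.pi), f θ‖ ≤ C := by
  have hint := intervalIntegral.norm_integral_le_of_norm_le_const (a := 0) (b := 2 * Real.pi)
    fun θ _ => hf θ
  rw [sub_zero, abs_of_pos Real.two_pi_pos] at hint
  rw [norm_mul, norm_div, norm_one, norm_mul, norm_I, mul_one, norm_mul, Complex.norm_ofNat,
    Complex.norm_real, Real.norm_of_nonneg Real.pi_pos.le, one_div_mul_eq_div,
    div_le_iff₀ Real.two_pi_pos]
  linarith

lemma norm_one_div_two_pi_I_mul_integral_sub_le {f : ℝ → ℂ} {c : ℂ} {C : ℝ}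
    (hfi : IntervalIntegrable f MeasureTheory.volume 0 (2 * Real.pi))
    (hf : ∀ θ, ‖f θ - I * c‖ ≤ C) :
    ‖1 / (2 * Real.pi * I) * (∫ θ in (0:ℝ)..(2 * Real.pi), f θ) - c‖ ≤ C := by
  have hpi : (Real.pi : ℂ) ≠ 0 := ofReal_ne_zero.mpr Real.pi_ne_zero
  have hsplit : 1 / (2 * Real.pi * I) * (∫ θ in (0:ℝ)..(2 * Real.pi), f θ) - c =
      1 / (2 * Real.pi * I) * ∫ θ in (0:ℝ)..(2 * Real.pi), (f θ - I * c) := by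
    rw [intervalIntegral.integral_sub hfi intervalIntegrable_const,
      intervalIntegral.integral_const, sub_zero, real_smul]
    push_cast
    field_simp
  rw [hsplit]
  exact norm_one_div_two_pi_I_mul_integral_le hf

lemma norm_conj_pow_div_pow_sub_conj_pow_le {m n : ℕ} (hmn : m < n) {z : ℂ} (hz : ‖z‖ ≤ 1 / 2) :
    ‖conj z ^ n / (z ^ m - conj z ^ n)‖ ≤ 2 * ‖z‖ := by
  set D := z ^ m - conj z ^ n
  rcases eq_or_ne D 0 with hD | hD
  · simp [hD]
  set r := ‖z‖
  have hr : 0 ≤ r := norm_nonneg z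
  have hrn : r ^ n ≤ r ^ (m + 1) := pow_le_pow_of_le_one hr (by linarith) hmn
  have hD_ge : r ^ m - r ^ n ≤ ‖D‖ := by
    simpa [D, r, norm_pow] using norm_sub_norm_le (z ^ m) (conj z ^ n)
  rw [norm_div, norm_pow, RCLike.norm_conj, div_le_iff₀ (norm_pos_iff.mpr hD)]
  calc r ^ n ≤ r ^ (m + 1) := hrn
    _ ≤ 2 * r * (r ^ m - r ^ n) := by
        have : 2 * r * r ^ n ≤ r ^ n := by nlinarith [pow_nonneg hr n]
        rw [pow_succ] at hrn ⊢
        linarith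
    _ ≤ 2 * r * ‖D‖ := by gcongr

lemma pow_sub_conj_pow_ne_zero {m n : ℕ} (hmn : m < n) {z : ℂ} (hz0 : z ≠ 0) (hz1 : ‖z‖ < 1) :
    z ^ m - conj z ^ n ≠ 0 := by
  intro h
  have hnorm : ‖z‖ ^ m = ‖z‖ ^ n := by
    rw [← norm_pow, ← RCLike.norm_conj z, ← norm_pow, sub_eq_zero.mp h]
  exact (pow_lt_pow_right_of_lt_one₀ (norm_pos_iff.mpr hz0) hz1 hmn).ne' hnorm

lemma mul_natCast_mul_pow_pred_div {n : ℕ} (hn : n ≠ 0) (w D : ℂ) :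
    w * ((n : ℂ) * w ^ (n - 1) / D) = n * (w ^ n / D) := by
  rw [← mul_pow_sub_one hn w]
  ring

lemma norm_one_div_two_pi_I_mul_circleIntegral_sub_le {m n : ℕ} (hm : m ≠ 0) (hmn : m < n)
    {ε : ℝ} (hε : 0 < ε) (hε2 : ε ≤ 1 / 2) :
    ‖1 / (2 * Real.pi * I) *
        (∮ z in C(0, ε), ((m : ℂ) * z ^ (m - 1)) / (z ^ m - conj z ^ n)) - m‖ ≤ 2 * m * ε := by
  have hD : ∀ z ∈ Metric.sphere (0 : ℂ) ε, z ^ m - conj z ^ n ≠ 0 := fun z hz => by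
    rw [mem_sphere_zero_iff_norm] at hz
    exact pow_sub_conj_pow_ne_zero hmn (norm_pos_iff.mp (hz ▸ hε)) (by linarith)
  have hF : CircleIntegrable (fun z => ((m : ℂ) * z ^ (m - 1)) / (z ^ m - conj z ^ n)) 0 ε :=
    ContinuousOn.circleIntegrable hε.le <| ContinuousOn.div (by fun_prop) (by fun_prop) hD
  refine norm_one_div_two_pi_I_mul_integral_sub_le hF.out fun θ => ?_
  have hz : ‖circleMap 0 ε θ‖ = ε := by rw [norm_circleMap_zero, abs_of_pos hε]
  rw [deriv_circleMap, smul_eq_mul]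
  set z := circleMap 0 ε θ
  have hDz := hD z (mem_sphere_zero_iff_norm.mpr hz)
  calc ‖z * I * ((m : ℂ) * z ^ (m - 1) / (z ^ m - conj z ^ n)) - I * m‖
      = m * ‖conj z ^ n / (z ^ m - conj z ^ n)‖ := by
        rw [mul_comm z I, mul_assoc, mul_natCast_mul_pow_pred_div hm]
        have hsplit : z ^ m / (z ^ m - conj z ^ n) = 1 + conj z ^ n / (z ^ m - conj z ^ n) := by
          field_simp
          ring
        rw [hsplit]
        simp [mul_add]
    _ ≤ m * (2 * ε) := by
        gcongr
        exact hz ▸ norm_conj_pow_div_pow_sub_conj_pow_le hmn (hz ▸ hε2)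
    _ = 2 * m * ε := by ring

lemma norm_one_div_two_pi_I_mul_circleIntegralConj_le {m n : ℕ} (hmn : m < n)
    {ε : ℝ} (hε : 0 < ε) (hε2 : ε ≤ 1 / 2) :
    ‖1 / (2 * Real.pi * I) * circleIntegralConj
        (fun z => (-(n : ℂ) * conj z ^ (n - 1)) / (z ^ m - conj z ^ n)) 0 ε‖ ≤ 2 * n * ε := by
  refine norm_one_div_two_pi_I_mul_integral_le fun θ => ?_
  have hz : ‖circleMap 0 ε θ‖ = ε := by rw [norm_circleMap_zero, abs_of_pos hε]
  rw [deriv_circleMap]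
  set z := circleMap 0 ε θ
  calc ‖conj (z * I) * (-(n : ℂ) * conj z ^ (n - 1) / (z ^ m - conj z ^ n))‖
      = ‖I * (conj z * ((n : ℂ) * conj z ^ (n - 1) / (z ^ m - conj z ^ n)))‖ := by
        rw [map_mul, conj_I]
        ring_nf
    _ = n * ‖conj z ^ n / (z ^ m - conj z ^ n)‖ := by
        rw [mul_natCast_mul_pow_pred_div (by omega)]
        simp
    _ ≤ n * (2 * ε) := by
        gcongr
        exact hz ▸ norm_conj_pow_div_pow_sub_conj_pow_le hmn (hz ▸ hε2)
    _ = 2 * n * ε := by ring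

lemma tendsto_nhdsGT_zero_of_norm_sub_le_mul {g : ℝ → ℂ} {L : ℂ} {K δ : ℝ} (hδ : 0 < δ)
    (hg : ∀ ε, 0 < ε → ε ≤ δ → ‖g ε - L‖ ≤ K * ε) :
    Tendsto g (nhdsWithin 0 (Set.Ioi 0)) (nhds L) := by
  rw [tendsto_iff_norm_sub_tendsto_zero]
  refine squeeze_zero' (Eventually.of_forall fun _ => norm_nonneg _) ?_ ?_ (g := fun ε => K * ε)
  · filter_upwards [Ioc_mem_nhdsGT hδ] with ε hε using hg ε hε.1 hε.2
  · simpa using (tendsto_id.const_mul K).mono_left (nhdsWithin_le_nhds (a := (0 : ℝ)))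

/-- For positive integers `m < n`, as `ε → 0⁺`,
`(1/(2πi)) ∮_{|z|=ε} (m z^{m-1})/(z^m - z̄^n) dz → m` and
`(1/(2πi)) ∮_{|z|=ε} (-n z̄^{n-1})/(z^m - z̄^n) dz̄ → 0`. -/
theorem stmt1 (m n : ℕ) (hm : 0 < m) (hmn : m < n) :
    Tendsto (fun ε : ℝ =>
        (1 / (2 * Real.pi * I)) *
          ∮ z in C(0, ε), ((m : ℂ) * z ^ (m - 1)) / (z ^ m - (starRingEnd ℂ) z ^ n))
      (nhdsWithin 0 (Set.Ioi 0)) (nhds (m : ℂ)) ∧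
    Tendsto (fun ε : ℝ =>
        (1 / (2 * Real.pi * I)) *
          circleIntegralConj
            (fun z => (-(n : ℂ) * (starRingEnd ℂ) z ^ (n - 1)) /
              (z ^ m - (starRingEnd ℂ) z ^ n)) 0 ε)
      (nhdsWithin 0 (Set.Ioi 0)) (nhds 0) :=
  ⟨tendsto_nhdsGT_zero_of_norm_sub_le_mul one_half_pos fun _ hε hε2 =>
      norm_one_div_two_pi_I_mul_circleIntegral_sub_le hm.ne' hmn hε hε2,
    tendsto_nhdsGT_zero_of_norm_sub_le_mul one_half_pos fun _ hε hε2 => by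
      simpa using norm_one_div_two_pi_I_mul_circleIntegralConj_le hmn hε hε2⟩
end

section
/- Let k ≥ 2 and 0 < a < π/2. The equation z^k e^{az} = conj(−e^{az}/z^k) for z ∈ ℂ \ {0} forces |z| = 1, and writing z = e^{iθ} it reduces to e^{2ai sin θ} = −1, which has no real solution θ when 0 < a < π/2. -/
/-!
Taking norms of `z^k w = conj (-w / z^k)` gives `‖z‖^(2k) = 1`. On the unit circle `conj z = z⁻¹`,
so the right-hand side is `-exp (a z̄) z^k` and the equation becomes `exp (a (z - z̄)) = -1`, with
`a (z - z̄) = 2 a i Im z`. Finally `exp (t i) = -1` is impossible for `|t| ≤ 2a < π`, since there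
`arg (exp (t i)) = t ≠ π = arg (-1)`.
-/

open Complex ComplexConjugate

theorem norm_eq_one_of_pow_mul_eq_conj_neg_div_pow {k : ℕ} (hk : k ≠ 0) {z w : ℂ} (hz : z ≠ 0)
    (hw : w ≠ 0) (h : z ^ k * w = conj (-w / z ^ k)) : ‖z‖ = 1 := by
  have hnorm := congrArg (‖·‖) h
  simp only [norm_mul, norm_conj, norm_div, norm_neg, norm_pow] at hnorm
  have hzk : ‖z‖ ^ k ≠ 0 := pow_ne_zero _ (norm_ne_zero_iff.mpr hz)
  rw [eq_div_iff hzk] at hnorm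
  have hsq : ‖z‖ ^ (2 * k) = 1 := by
    rw [mul_comm, pow_mul]
    exact mul_right_cancel₀ (norm_ne_zero_iff.mpr hw) (by linear_combination hnorm)
  exact (pow_eq_one_iff_of_nonneg (norm_nonneg z) (by omega)).mp hsq

theorem pow_mul_exp_eq_conj_iff_of_norm_eq_one (k : ℕ) (a : ℝ) {z : ℂ} (hz : ‖z‖ = 1) :
    z ^ k * exp (a * z) = conj (-exp (a * z) / z ^ k) ↔ exp (2 * a * I * z.im) = -1 := by
  have hconj : conj (-exp (a * z) / z ^ k) = exp (a * conj z) * z ^ k * -1 := by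
    rw [map_div₀, map_neg, ← exp_conj, map_mul, conj_ofReal, map_pow, ← inv_eq_conj hz, inv_pow,
      div_inv_eq_mul]
    ring
  have hsplit : exp (a * z) = exp (a * conj z) * exp (2 * a * I * z.im) := by
    rw [← exp_add]
    congr 1
    have hdiff := sub_conj z
    push_cast at hdiff
    linear_combination (a : ℂ) * hdiff
  have hne : exp (a * conj z) * z ^ k ≠ 0 :=
    mul_ne_zero (exp_ne_zero _) (pow_ne_zero _ (norm_ne_zero_iff.mp (by simp [hz])))
  rw [hconj, hsplit, ← mul_right_inj' hne (b := exp (2 * a * I * z.im))]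
  ring_nf

theorem exp_ofReal_mul_I_ne_neg_one {t : ℝ} (ht : |t| < Real.pi) : exp (t * I) ≠ -1 := by
  intro h
  have harg : (exp (t * I)).arg = t := by
    rw [exp_mul_I]
    exact arg_cos_add_sin_mul_I ⟨(abs_lt.mp ht).1, (abs_lt.mp ht).2.le⟩
  rw [h, arg_neg_one] at harg
  exact (abs_lt.mp ht).2.ne' harg

/-- For `k ≥ 2` and `0 < a < π/2`:
(i) any solution `z ≠ 0` of `z^k e^{az} = conj(-e^{az}/z^k)` satisfies `|z| = 1`;
(ii) for `z = e^{iθ}` the equation is equivalent to `e^{2ai sin θ} = -1`;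
(iii) the latter has no real solution `θ`. -/
theorem stmt3 (k : ℕ) (hk : 2 ≤ k) (a : ℝ) (ha : 0 < a) (ha' : a < Real.pi / 2) :
    (∀ z : ℂ, z ≠ 0 →
        z ^ k * Complex.exp ((a : ℂ) * z) =
          (starRingEnd ℂ) (-(Complex.exp ((a : ℂ) * z)) / z ^ k) →
        ‖z‖ = 1) ∧
    (∀ θ : ℝ,
        (Complex.exp (I * θ)) ^ k * Complex.exp ((a : ℂ) * Complex.exp (I * θ)) =
            (starRingEnd ℂ)
              (-(Complex.exp ((a : ℂ) * Complex.exp (I * θ))) /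
                (Complex.exp (I * θ)) ^ k) ↔
          Complex.exp (2 * (a : ℂ) * I * Real.sin θ) = -1) ∧
    (∀ θ : ℝ, Complex.exp (2 * (a : ℂ) * I * Real.sin θ) ≠ -1) := by
  refine ⟨fun z hz h ↦ norm_eq_one_of_pow_mul_eq_conj_neg_div_pow (by omega) hz (exp_ne_zero _) h,
    fun θ ↦ ?_, fun θ ↦ ?_⟩
  · rw [mul_comm I]
    simpa only [exp_ofReal_mul_I_im] using
      pow_mul_exp_eq_conj_iff_of_norm_eq_one k a (norm_exp_ofReal_mul_I θ)
  · have hbound : |2 * a * Real.sin θ| < Real.pi := by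
      rw [abs_mul, abs_of_pos (by positivity : 0 < 2 * a)]
      nlinarith [Real.abs_sin_le_one θ]
    convert exp_ofReal_mul_I_ne_neg_one hbound using 2
    push_cast
    ring
end
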